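/- arXiv:quant-ph/0207131 — 2 statements merged into one kernel-verified Lean document; each statement's English description precedes it below -/
import Mathlib

section
/- If χ and ψ are multiplicative characters on F_q with χ, ψ, and χψ all nontrivial, then the Jacobi sum has absolute value |J(χ, ψ)| = √q. -/
/-- With `χ`, `ψ`, `χψ` all nontrivial, the Jacobi sum has absolute value `√q`. -/
theorem statement9 (F : Type*) [Field F] [Fintype F]
    (χ ψ : MulChar F ℂ) (hχ : χ ≠ 1) (hψ : ψ ≠ 1) (hχψ : χ * ψ ≠ 1) :
    ‖(∑ x : F, χ x * ψ (1 - x))‖ = Real.sqrt (Fintype.card F) := by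
  have hchar : ringChar ℂ ≠ ringChar F := by
    have h0 : ringChar ℂ = 0 := ringChar.eq_zero
    have h1 : ringChar F ≠ 0 := CharP.ringChar_ne_zero_of_finite F
    rw [h0]
    exact fun h => h1 h.symm
  have key := jacobiSum_mul_jacobiSum_inv hchar hχ hψ hχψ
  have hconj : jacobiSum χ⁻¹ ψ⁻¹ = (starRingEnd ℂ) (jacobiSum χ ψ) := by
    simp only [jacobiSum, map_sum, map_mul]
    refine Finset.sum_congr rfl fun x _ => ?_
    rw [← MulChar.star_apply' χ x, ← MulChar.star_apply' ψ (1 - x)]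
    rfl
  rw [hconj, Complex.mul_conj] at key
  have hsq : Complex.normSq (jacobiSum χ ψ) = (Fintype.card F : ℝ) := by
    exact_mod_cast key
  have : ‖jacobiSum χ ψ‖ = Real.sqrt (Fintype.card F) := by
    rw [Complex.norm_def, hsq]
  exact this
end

section
/- Let n = ∏_{i=0}^{k} p_i^{r_i} be the prime factorization of n, and let χ = ∏_i χ_i be the corresponding factorization of a Dirichlet character χ mod n into characters χ_i mod p_i^{r_i}. Let J_i satisfy J_i · (n / p_i^{r_i}) ≡ 1 (mod p_i^{r_i}). Then the Gauss sum factors as G(ℤ/nℤ, χ, β) = ∏_i G(ℤ/p_i^{r_i}ℤ, χ_i, β J_i), where G(ℤ/mℤ, ψ, β) = ∑_{x mod m} ψ(x) e^{2πi βx/m}. -/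
/-- The Gauss sum `G(ℤ/mℤ, ψ, b) = ∑_{x=0}^{m-1} ψ(x) e^{2πi b x / m}`. -/
noncomputable def gaussZ (m : ℕ) (ψ : DirichletCharacter ℂ m) (b : ℕ) : ℂ :=
  ∑ x ∈ Finset.range m,
    ψ (x : ZMod m) * Complex.exp (2 * (Real.pi : ℂ) * Complex.I * (b : ℂ) * (x : ℂ) / m)

lemma gaussZ_eq_sum_zmod (m : ℕ) [NeZero m] (ψ : DirichletCharacter ℂ m) (b : ℕ) :
    gaussZ m ψ b = ∑ z : ZMod m,
      ψ z * Complex.exp (2 * (Real.pi : ℂ) * Complex.I * (b : ℂ) * (z.val : ℂ) / m) := by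
  unfold gaussZ
  refine Finset.sum_nbij' (fun x => (x : ZMod m)) (fun z => z.val) ?_ ?_ ?_ ?_ ?_
  · intro a _; exact Finset.mem_univ _
  · intro z _; exact Finset.mem_range.mpr (ZMod.val_lt z)
  · intro a ha
    exact ZMod.val_cast_of_lt (Finset.mem_range.mp ha)
  · intro z _
    simp [ZMod.natCast_val, ZMod.cast_id]
  · intro a ha
    rw [ZMod.val_cast_of_lt (Finset.mem_range.mp ha)]

/-- If `n = ∏ pᵢ^{rᵢ}` with `χ = ∏ χᵢ` the corresponding factorization of a Dirichlet
character mod `n`, and `Jᵢ (n / pᵢ^{rᵢ}) ≡ 1 (mod pᵢ^{rᵢ})`, then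
`G(ℤ/nℤ, χ, β) = ∏ᵢ G(ℤ/pᵢ^{rᵢ}ℤ, χᵢ, β Jᵢ)`. -/
theorem statement16 (n k : ℕ) (hn : 2 ≤ n)
    (p r : Fin (k + 1) → ℕ) (hp : ∀ i, (p i).Prime) (hdist : Function.Injective p)
    (hr : ∀ i, 1 ≤ r i) (hfac : n = ∏ i, p i ^ r i)
    (χ : DirichletCharacter ℂ n) (χi : ∀ i, DirichletCharacter ℂ (p i ^ r i))
    (hχ : ∀ x : ℕ, χ (x : ZMod n) = ∏ i, χi i (x : ZMod (p i ^ r i)))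
    (J : Fin (k + 1) → ℕ)
    (hJ : ∀ i, ((J i * (n / p i ^ r i) : ℕ) : ZMod (p i ^ r i)) = 1)
    (β : ℕ) :
    gaussZ n χ β = ∏ i, gaussZ (p i ^ r i) (χi i) (β * J i) := by
  classical
  have hn0 : 0 < n := lt_of_lt_of_le two_pos hn
  haveI : NeZero n := ⟨hn0.ne'⟩
  set q : Fin (k + 1) → ℕ := fun i => p i ^ r i with hqdef
  have hq0 : ∀ i, 0 < q i := fun i => pow_pos (hp i).pos _
  haveI : ∀ i, NeZero (q i) := fun i => ⟨(hq0 i).ne'⟩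
  have hcop : Pairwise (Function.onFun Nat.Coprime q) := by
    intro i j hij
    exact Nat.Coprime.pow _ _ ((Nat.coprime_primes (hp i) (hp j)).mpr fun h => hij (hdist h))
  have hdvd : ∀ i, q i ∣ n := fun i => hfac ▸ Finset.dvd_prod_of_mem _ (Finset.mem_univ i)
  have hdiv : ∀ i, n / q i = ∏ l ∈ Finset.univ.erase i, q l := by
    intro i
    rw [hfac, ← Finset.mul_prod_erase _ _ (Finset.mem_univ i),
      Nat.mul_div_cancel_left _ (hq0 i)]
  -- the key exponential identity
  have hkey : ∀ N : ℕ,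
      Complex.exp (2 * (Real.pi : ℂ) * Complex.I * (β : ℂ) * (N : ℂ) / n) =
      ∏ i, Complex.exp (2 * (Real.pi : ℂ) * Complex.I * ((β * J i : ℕ) : ℂ)
        * ((N % q i : ℕ) : ℂ) / (q i)) := by
    intro N
    rw [← Complex.exp_sum]
    obtain ⟨m', hm'⟩ : ∃ m' : Fin (k + 1) → ℕ, ∀ i, m' i = N % q i :=
      ⟨fun i => N % q i, fun _ => rfl⟩
    obtain ⟨d, hd⟩ : ∃ d : Fin (k + 1) → ℕ, ∀ i, d i = n / q i :=
      ⟨fun i => n / q i, fun _ => rfl⟩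
    simp only [fun i => (hm' i).symm, fun i => (hd i).symm]
    -- divisibility : for each j, q j divides the integer difference
    have hdvdj : ∀ j, (q j : ℤ) ∣
        ((β : ℤ) * N - ∑ i, (β : ℤ) * (J i) * (m' i : ℤ) * (d i : ℤ)) := by
      intro j
      rw [← ZMod.intCast_zmod_eq_zero_iff_dvd]
      push_cast
      have hzero : ∀ i ∈ Finset.univ.erase j,
          (β : ZMod (q j)) * (J i) * (m' i : ZMod (q j))
            * (d i : ZMod (q j)) = 0 := by
        intro i hi
        have hij : j ≠ i := fun h => (Finset.mem_erase.mp hi).1 h.symm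
        have : (q j : ℕ) ∣ n / q i := by
          rw [hdiv i]
          exact Finset.dvd_prod_of_mem _ (Finset.mem_erase.mpr ⟨hij.symm ∘ Eq.symm, Finset.mem_univ j⟩)
        rw [hd i, (ZMod.natCast_eq_zero_iff _ _).mpr this, mul_zero]
      rw [← Finset.add_sum_erase _ _ (Finset.mem_univ j), Finset.sum_eq_zero hzero, add_zero]
      have h1 : ((J j * (n / q j) : ℕ) : ZMod (q j)) = 1 := hJ j
      push_cast at h1
      have : (β : ZMod (q j)) * (J j) * (m' j : ZMod (q j)) * (d j : ZMod (q j))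
          = (β : ZMod (q j)) * (m' j : ZMod (q j)) * ((J j : ZMod (q j)) * (d j : ZMod (q j))) := by
        ring
      rw [this, hd j, h1, mul_one, hm' j, ZMod.natCast_mod, sub_self]
    have hndvd : (n : ℤ) ∣
        ((β : ℤ) * N - ∑ i, (β : ℤ) * (J i) * (m' i : ℤ) * (d i : ℤ)) := by
      have : (n : ℤ) = ∏ i, (q i : ℤ) := by rw [hfac, Nat.cast_prod]
      rw [this]
      refine Fintype.prod_dvd_of_coprime ?_ hdvdj
      intro i j hij
      exact Nat.isCoprime_iff_coprime.mpr (hcop hij)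
    obtain ⟨K, hK⟩ := hndvd
    rw [Complex.exp_eq_exp_iff_exists_int]
    refine ⟨K, ?_⟩
    have hsum : ∑ i, 2 * (Real.pi : ℂ) * Complex.I * ((β * J i : ℕ) : ℂ)
        * (m' i : ℂ) / (q i)
        = (2 * (Real.pi : ℂ) * Complex.I / n)
          * ∑ i, (β : ℂ) * (J i) * (m' i : ℂ) * (d i : ℂ) := by
      rw [Finset.mul_sum]
      refine Finset.sum_congr rfl fun i _ => ?_
      have hqn : ((q i : ℂ)) * (d i : ℂ) = (n : ℂ) := by
        rw [hd i, ← Nat.cast_mul, Nat.mul_div_cancel' (hdvd i)]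
      have hq0' : (q i : ℂ) ≠ 0 := Nat.cast_ne_zero.mpr (hq0 i).ne'
      have hn0' : (n : ℂ) ≠ 0 := Nat.cast_ne_zero.mpr hn0.ne'
      field_simp
      push_cast
      rw [← hqn]
      ring
    rw [hsum]
    have hcastK : ((β : ℂ) * N - ∑ i, (β : ℂ) * (J i) * (m' i : ℂ) * (d i : ℂ))
        = (n : ℂ) * K := by
      have := congrArg (fun z : ℤ => (z : ℂ)) hK
      push_cast at this
      convert this using 2
    have hn0' : (n : ℂ) ≠ 0 := Nat.cast_ne_zero.mpr hn0.ne'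
    have : 2 * (Real.pi : ℂ) * Complex.I * (β : ℂ) * (N : ℂ) / n
        - (2 * (Real.pi : ℂ) * Complex.I / n)
          * ∑ i, (β : ℂ) * (J i) * (m' i : ℂ) * (d i : ℂ)
        = (2 * (Real.pi : ℂ) * Complex.I / n)
          * ((β : ℂ) * N - ∑ i, (β : ℂ) * (J i) * (m' i : ℂ) * (d i : ℂ)) := by
      ring
    have h2 := this
    rw [hcastK] at h2
    have : (2 * (Real.pi : ℂ) * Complex.I / n) * ((n : ℂ) * K) = (K : ℂ) * (2 * Real.pi * Complex.I) := by
      field_simp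
    linear_combination h2 + this
  -- set up the CRT equivalence
  have hfac' : n = ∏ i, q i := hfac
  let e : ZMod n ≃+* ∀ i, ZMod (q i) :=
    (ZMod.ringEquivCongr hfac').trans (ZMod.prodEquivPi q hcop)
  set F : ZMod n → ℂ := fun z =>
    χ z * Complex.exp (2 * (Real.pi : ℂ) * Complex.I * (β : ℂ) * (z.val : ℂ) / n) with hF
  have hG : ∀ i, gaussZ (q i) (χi i) (β * J i) = ∑ z : ZMod (q i),
      χi i z * Complex.exp (2 * (Real.pi : ℂ) * Complex.I * ((β * J i : ℕ) : ℂ)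
        * (z.val : ℂ) / (q i)) :=
    fun i => gaussZ_eq_sum_zmod (q i) (χi i) (β * J i)
  have step1 : gaussZ n χ β = ∑ z : ZMod n, F z := gaussZ_eq_sum_zmod n χ β
  have step2 : ∑ z : ZMod n, F z = ∑ y : ∀ i, ZMod (q i), F (e.symm y) :=
    (Fintype.sum_equiv e.symm.toEquiv _ _ fun y => rfl).symm
  have step3 : ∀ y : ∀ i, ZMod (q i), F (e.symm y) =
      ∏ i, (χi i (y i) * Complex.exp (2 * (Real.pi : ℂ) * Complex.I * ((β * J i : ℕ) : ℂ)
        * ((y i).val : ℂ) / (q i))) := by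
    intro y
    set z : ZMod n := e.symm y with hzdef
    set N : ℕ := z.val with hN
    have hz : ((N : ℕ) : ZMod n) = z := by
      simp [hN, ZMod.natCast_val, ZMod.cast_id]
    have hy : ∀ i, y i = ((N : ℕ) : ZMod (q i)) := by
      intro i
      have h1 : e z = y := e.apply_symm_apply y
      calc y i = (e z) i := by rw [h1]
        _ = (e ((N : ℕ) : ZMod n)) i := by rw [hz]
        _ = (((N : ℕ) : ∀ i, ZMod (q i))) i := by rw [map_natCast]
        _ = ((N : ℕ) : ZMod (q i)) := rfl
    have hval : ∀ i, (y i).val = N % q i := by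
      intro i; rw [hy i, ZMod.val_natCast]
    rw [Finset.prod_mul_distrib]
    have hchi : χ z = ∏ i, χi i (y i) := by
      rw [← hz, hχ N]
      exact Finset.prod_congr rfl fun i _ => by rw [hy i]
    have hexp : Complex.exp (2 * (Real.pi : ℂ) * Complex.I * (β : ℂ) * (N : ℂ) / n)
        = ∏ i, Complex.exp (2 * (Real.pi : ℂ) * Complex.I * ((β * J i : ℕ) : ℂ)
          * ((y i).val : ℂ) / (q i)) := by
      rw [hkey N]
      exact Finset.prod_congr rfl fun i _ => by rw [hval i]
    rw [hF]
    simp only []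
    rw [hchi, ← hexp]
  have step4 : ∑ y : ∀ i, ZMod (q i),
      ∏ i, (χi i (y i) * Complex.exp (2 * (Real.pi : ℂ) * Complex.I * ((β * J i : ℕ) : ℂ)
        * ((y i).val : ℂ) / (q i)))
      = ∏ i, ∑ z : ZMod (q i),
        χi i z * Complex.exp (2 * (Real.pi : ℂ) * Complex.I * ((β * J i : ℕ) : ℂ)
          * (z.val : ℂ) / (q i)) := by
    rw [Finset.prod_univ_sum]
    rw [Fintype.piFinset_univ]
  rw [step1, step2, Finset.sum_congr rfl fun y _ => step3 y, step4]
  exact Finset.prod_congr rfl fun i _ => (hG i).symm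
end
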